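/- arXiv:2105.11737 — 3 statements merged into one kernel-verified Lean document; each statement's English description precedes it below -/
import Mathlib

section
/- ID is the smallest non-trivial characteristic class: if a characteristic class 𝓕 contains a measure-theoretic dynamical system on a standard Borel probability space which is not (isomorphic to) the one-point system, then 𝓕 contains the identity automorphism of every standard Borel probability space. -/
/- NOTE: structures with instance-implicit fields must be declared before
`open MeasureTheory` (the latter's notations clash with `[...]` fields). -/
/-- A measure-theoretic dynamical system: an automorphism (an invertible
measure-preserving transformation) of a standard Borel probability space. -/
structure MSys where
  Z : Type
  [mZ : MeasurableSpace Z]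
  [sb : StandardBorelSpace Z]
  μ : MeasureTheory.Measure Z
  prob : MeasureTheory.IsProbabilityMeasure μ
  T : Z ≃ᵐ Z
  mp : MeasureTheory.MeasurePreserving T μ μ

attribute [instance] MSys.mZ MSys.sb MSys.prob
open MeasureTheory Filter Topology
open scoped ENNReal
/-- `Y` is a (measure-theoretic) factor of `X`. -/
def IsFactorOf (Y X : MSys) : Prop :=
  ∃ π : X.Z → Y.Z, MeasurePreserving π X.μ Y.μ ∧ ∀ᵐ z ∂X.μ, π (X.T z) = Y.T (π z)

/-- `X` and `Y` are isomorphic measure-theoretic dynamical systems. -/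
def IsIsoOf (X Y : MSys) : Prop :=
  ∃ π : X.Z → Y.Z, MeasurePreserving π X.μ Y.μ ∧ (∀ᵐ z ∂X.μ, π (X.T z) = Y.T (π z)) ∧
    ∃ σ : Y.Z → X.Z, MeasurePreserving σ Y.μ X.μ ∧ (∀ᵐ z ∂X.μ, σ (π z) = z)

/-- The product transformation on the product of the phase spaces of a countable
family of systems. -/
noncomputable def prodMapSys (Xi : ℕ → MSys) : (∀ i, (Xi i).Z) ≃ᵐ (∀ i, (Xi i).Z) :=
  MeasurableEquiv.piCongrRight (fun i => (Xi i).T)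

/-- `ρ` is a (countable) joining of the family `Xi` : a probability measure on the
product, invariant under the product transformation, projecting onto the given
measures. -/
def IsJoining (Xi : ℕ → MSys) (ρ : Measure (∀ i, (Xi i).Z)) : Prop :=
  IsProbabilityMeasure ρ ∧ MeasurePreserving (prodMapSys Xi) ρ ρ ∧
    ∀ i, Measure.map (fun z => z i) ρ = (Xi i).μ

/-- The system given by a joining `ρ` of the countable family `Xi`. -/
noncomputable def joinSys (Xi : ℕ → MSys) (ρ : Measure (∀ i, (Xi i).Z))
    (h : IsJoining Xi ρ) : MSys :=
  { Z := ∀ i, (Xi i).Z, μ := ρ, prob := h.1, T := prodMapSys Xi, mp := h.2.1 }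

/-- A class `F` of measure-theoretic dynamical systems is characteristic if it is
closed under isomorphisms, factors and countable joinings. -/
def IsCharacteristic (F : MSys → Prop) : Prop :=
  (∀ X Y, IsIsoOf X Y → F X → F Y) ∧
  (∀ X Y, F X → IsFactorOf Y X → F Y) ∧
  (∀ Xi : ℕ → MSys, (∀ i, F (Xi i)) →
    ∀ (ρ : Measure (∀ i, (Xi i).Z)) (h : IsJoining Xi ρ), F (joinSys Xi ρ h))

/-- The trivial one-point measure-theoretic dynamical system. -/
noncomputable def pointSys : MSys :=
  { Z := PUnit, μ := Measure.dirac PUnit.unit, prob := inferInstance,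
    T := MeasurableEquiv.refl PUnit, mp := MeasurePreserving.id _ }

/-- The identity automorphism on a standard Borel probability space. -/
noncomputable def idSys (Z : Type) [MeasurableSpace Z] [StandardBorelSpace Z]
    (μ : Measure Z) (hp : IsProbabilityMeasure μ) : MSys :=
  { Z := Z, μ := μ, prob := hp, T := MeasurableEquiv.refl Z, mp := MeasurePreserving.id μ }


/-!
If `W = (Z, μ, T)` is not isomorphic to the point, then `(μ × μ)(Δ) < 1`: otherwise `μ` would be
a zero-one measure, hence a Dirac mass. In the self-joining `½ (μ × μ) + ½ μ_Δ` of `W` the event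
"both coordinates agree" is invariant, as `T` is injective, and its probability lies in `[½, 1)`;
as a factor it yields a non-trivial identity system on `Bool`.

Coupling two copies of a Bernoulli(`q`) identity system, the conjunction of the two bits can have
any parameter in `[max 0 (2q - 1), q]`; together with negation this doubles small parameters until
`½` is reached, and from `½` every parameter is reached. Finally, a standard Borel probability
space embeds into the Cantor space `ℕ → Bool`, where every probability measure is a joining of its
marginals, i.e. of Bernoulli identity systems.
-/

namespace IsCharacteristic

variable {F : MSys → Prop}

theorem mem_idSys_of_invariant (hF : IsCharacteristic F) {X : MSys} (hX : F X)
    {Y : Type} [MeasurableSpace Y] [StandardBorelSpace Y] {ν : Measure Y}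
    (hν : IsProbabilityMeasure ν) {f : X.Z → Y} (hf : Measurable f)
    (hfT : ∀ᵐ z ∂X.μ, f (X.T z) = f z) (hfν : X.μ.map f = ν) :
    F (idSys Y ν hν) :=
  hF.2.1 X _ hX ⟨f, ⟨hf, hfν⟩, hfT⟩

theorem mem_idSys_pi (hF : IsCharacteristic F) {Z : ℕ → Type} [∀ i, MeasurableSpace (Z i)]
    [∀ i, StandardBorelSpace (Z i)] (ρ : Measure (∀ i, Z i)) [IsProbabilityMeasure ρ]
    (hρ : ∀ i, F (idSys (Z i) (ρ.map (· i))
      (Measure.isProbabilityMeasure_map (measurable_pi_apply i).aemeasurable))) :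
    F (idSys (∀ i, Z i) ρ inferInstance) := by
  let Xi : ℕ → MSys := fun i => idSys (Z i) (ρ.map (· i))
    (Measure.isProbabilityMeasure_map (measurable_pi_apply i).aemeasurable)
  have hjoin : IsJoining Xi ρ := ⟨‹_›, MeasurePreserving.id ρ, fun _ => rfl⟩
  exact hF.mem_idSys_of_invariant (hF.2.2 Xi hρ ρ hjoin) inferInstance measurable_id
    (ae_of_all _ fun _ => rfl) Measure.map_id

theorem mem_idSys_of_selfJoining (hF : IsCharacteristic F) {X : MSys} (hX : F X)
    (κ : Measure (X.Z × X.Z)) [hκ : IsProbabilityMeasure κ]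
    (hκT : MeasurePreserving (Prod.map X.T X.T) κ κ)
    (hfst : κ.map Prod.fst = X.μ) (hsnd : κ.map Prod.snd = X.μ)
    {Y : Type} [MeasurableSpace Y] [StandardBorelSpace Y] {ν : Measure Y}
    (hν : IsProbabilityMeasure ν) {f : X.Z × X.Z → Y} (hf : Measurable f)
    (hfT : ∀ x, f (Prod.map X.T X.T x) = f x) (hfν : κ.map f = ν) :
    F (idSys Y ν hν) := by
  let J : X.Z × X.Z → ℕ → X.Z := fun x i => if i = 0 then x.1 else x.2
  have hJ : Measurable J := measurable_pi_lambda _ fun i => by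
    by_cases hi : i = 0 <;> simp only [J, hi, if_true, if_false]
    exacts [measurable_fst, measurable_snd]
  have hJT : prodMapSys (fun _ => X) ∘ J = J ∘ Prod.map X.T X.T := by
    funext x i
    exact (apply_ite X.T _ _ _)
  have hjoin : IsJoining (fun _ => X) (κ.map J) := by
    refine ⟨Measure.isProbabilityMeasure_map hJ.aemeasurable,
      ⟨(prodMapSys _).measurable, ?_⟩, fun i => ?_⟩
    · rw [Measure.map_map (prodMapSys _).measurable hJ, hJT,
        ← Measure.map_map hJ hκT.measurable, hκT.map_eq]
    · rw [Measure.map_map (measurable_pi_apply i) hJ]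
      by_cases hi : i = 0
      · simpa [Function.comp_def, J, hi] using hfst
      · simpa [Function.comp_def, J, hi] using hsnd
  have hpair : Measurable fun x : ℕ → X.Z => (x 0, x 1) :=
    (measurable_pi_apply 0).prodMk (measurable_pi_apply 1)
  refine hF.mem_idSys_of_invariant (hF.2.2 _ (fun _ => hX) _ hjoin) hν (hf.comp hpair)
    (ae_of_all _ fun x => hfT (x 0, x 1)) ?_
  change (κ.map J).map (f ∘ fun x : ℕ → X.Z => (x 0, x 1)) = ν
  rw [← hfν, Measure.map_map (hf.comp hpair) hJ]
  rfl

end IsCharacteristic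

theorem MeasureTheory.Measure.ext_of_apply_true {μ ν : Measure Bool} [IsProbabilityMeasure μ]
    [IsProbabilityMeasure ν] (h : μ {true} = ν {true}) : μ = ν := by
  refine Measure.ext_of_singleton fun b => ?_
  cases b
  · rw [show ({false} : Set Bool) = {true}ᶜ by ext b; simp,
      prob_compl_eq_one_sub (measurableSet_singleton _),
      prob_compl_eq_one_sub (measurableSet_singleton _), h]
  · exact h

/-- Two bits, each `true` with probability `p`, that are both `true` with probability `c`. -/
noncomputable def boolCoupling (p c : ℝ) : Measure (Bool × Bool) :=
  ENNReal.ofReal c • Measure.dirac (true, true) +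
    ENNReal.ofReal (p - c) • Measure.dirac (true, false) +
    ENNReal.ofReal (p - c) • Measure.dirac (false, true) +
    ENNReal.ofReal (1 - 2 * p + c) • Measure.dirac (false, false)

open scoped Classical in
theorem boolCoupling_apply (p c : ℝ) (s : Set (Bool × Bool)) :
    boolCoupling p c s =
      (if (true, true) ∈ s then ENNReal.ofReal c else 0) +
        (if (true, false) ∈ s then ENNReal.ofReal (p - c) else 0) +
        (if (false, true) ∈ s then ENNReal.ofReal (p - c) else 0) +
        (if (false, false) ∈ s then ENNReal.ofReal (1 - 2 * p + c) else 0) := by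
  simp [boolCoupling, Measure.dirac_apply, Set.indicator_apply]

section boolCoupling

variable {p c : ℝ}

theorem isProbabilityMeasure_boolCoupling (hc0 : 0 ≤ c) (hcp : c ≤ p) (hc1 : 2 * p - 1 ≤ c) :
    IsProbabilityMeasure (boolCoupling p c) := by
  constructor
  rw [boolCoupling_apply]
  simp only [Set.mem_univ, if_true]
  rw [← ENNReal.ofReal_add, ← ENNReal.ofReal_add, ← ENNReal.ofReal_add, ← ENNReal.ofReal_one]
  · congr 1; ring
  all_goals first | positivity | linarith

theorem boolCoupling_map_fst_apply_true (hc0 : 0 ≤ c) (hcp : c ≤ p) :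
    (boolCoupling p c).map Prod.fst {true} = ENNReal.ofReal p := by
  rw [Measure.map_apply measurable_fst (measurableSet_singleton _), boolCoupling_apply]
  simp only [Set.mem_preimage, Set.mem_singleton_iff, Bool.false_eq_true, if_true, if_false,
    add_zero]
  rw [← ENNReal.ofReal_add hc0 (by linarith), add_sub_cancel]

theorem boolCoupling_map_snd_apply_true (hc0 : 0 ≤ c) (hcp : c ≤ p) :
    (boolCoupling p c).map Prod.snd {true} = ENNReal.ofReal p := by
  rw [Measure.map_apply measurable_snd (measurableSet_singleton _), boolCoupling_apply]
  simp only [Set.mem_preimage, Set.mem_singleton_iff, Bool.false_eq_true, if_true, if_false,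
    add_zero]
  rw [← ENNReal.ofReal_add hc0 (by linarith), add_sub_cancel]

theorem boolCoupling_map_and_apply_true :
    (boolCoupling p c).map (fun x => x.1 && x.2) {true} = ENNReal.ofReal c := by
  rw [Measure.map_apply (measurable_of_countable _) (measurableSet_singleton _),
    boolCoupling_apply]
  simp

end boolCoupling

def HasBernoulli (F : MSys → Prop) (p : ℝ) : Prop :=
  ∃ (ν : Measure Bool) (hν : IsProbabilityMeasure ν),
    ν {true} = ENNReal.ofReal p ∧ F (idSys Bool ν hν)

namespace HasBernoulli

variable {F : MSys → Prop} {p q : ℝ}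

theorem one_sub (hF : IsCharacteristic F) (h : HasBernoulli F p) (hp : 0 ≤ p) :
    HasBernoulli F (1 - p) := by
  obtain ⟨ν, hν, hνp, hFν⟩ := h
  have hnot : Measurable (fun b : Bool => !b) := measurable_of_countable _
  refine ⟨ν.map (fun b => !b), Measure.isProbabilityMeasure_map hnot.aemeasurable, ?_,
    hF.mem_idSys_of_invariant hFν _ hnot (ae_of_all _ fun _ => rfl) rfl⟩
  rw [Measure.map_apply hnot (measurableSet_singleton _),
    show (fun b : Bool => !b) ⁻¹' {true} = {true}ᶜ by ext b; simp,
    prob_compl_eq_one_sub (measurableSet_singleton _), hνp, ENNReal.ofReal_sub _ hp,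
    ENNReal.ofReal_one]

theorem of_and (hF : IsCharacteristic F) (h : HasBernoulli F p) {c : ℝ} (hc0 : 0 ≤ c)
    (hcp : c ≤ p) (hc1 : 2 * p - 1 ≤ c) : HasBernoulli F c := by
  obtain ⟨ν, hν, hνp, hFν⟩ := h
  have hκ := isProbabilityMeasure_boolCoupling hc0 hcp hc1
  have hand : Measurable (fun x : Bool × Bool => x.1 && x.2) := measurable_of_countable _
  have := Measure.isProbabilityMeasure_map (μ := boolCoupling p c) measurable_fst.aemeasurable
  have := Measure.isProbabilityMeasure_map (μ := boolCoupling p c) measurable_snd.aemeasurable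
  refine ⟨_, Measure.isProbabilityMeasure_map hand.aemeasurable,
    boolCoupling_map_and_apply_true,
    hF.mem_idSys_of_selfJoining hFν (boolCoupling p c) (hκ := hκ) (MeasurePreserving.id _) ?_ ?_
      _ hand (fun _ => rfl) rfl⟩
  · change (boolCoupling p c).map Prod.fst = ν
    exact Measure.ext_of_apply_true ((boolCoupling_map_fst_apply_true hc0 hcp).trans hνp.symm)
  · change (boolCoupling p c).map Prod.snd = ν
    exact Measure.ext_of_apply_true ((boolCoupling_map_snd_apply_true hc0 hcp).trans hνp.symm)

/-- By De Morgan, `r` is the parameter of the disjunction of two suitably coupled `q`-bits. -/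
theorem of_le_two_mul (hF : IsCharacteristic F) (h : HasBernoulli F q) (hq : 0 ≤ q) {r : ℝ}
    (hqr : q ≤ r) (hrq : r ≤ 2 * q) (hr : r ≤ 1) : HasBernoulli F r := by
  have h' := ((h.one_sub hF hq).of_and hF (c := 1 - r) (by linarith) (by linarith)
    (by linarith)).one_sub hF (by linarith)
  rwa [sub_sub_cancel] at h'

theorem half_of_pos (hF : IsCharacteristic F) (h : HasBernoulli F q) (hq0 : 0 < q)
    (hq : q ≤ 1 / 2) : HasBernoulli F (1 / 2) := by
  obtain ⟨n, hn⟩ := pow_unbounded_of_one_lt (1 / (2 * q)) one_lt_two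
  replace hn := ((div_lt_iff₀ (by positivity)).mp hn).le
  induction n generalizing q with
  | zero =>
    obtain rfl : q = 1 / 2 := by linarith
    exact h
  | succ n ih =>
    refine ih (h.of_le_two_mul hF hq0.le (le_min (by linarith) hq) (min_le_left _ _)
      ((min_le_right _ _).trans (by norm_num))) (lt_min (by linarith) (by norm_num))
      (min_le_right _ _) ?_
    rcases min_cases (2 * q) (1 / 2) with ⟨hmin, -⟩ | ⟨hmin, -⟩ <;> rw [hmin]
    · rw [pow_succ] at hn; linarith
    · linarith [one_le_pow₀ (n := n) (one_le_two (α := ℝ))]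

theorem of_half (hF : IsCharacteristic F) (h : HasBernoulli F (1 / 2)) (hp0 : 0 ≤ p)
    (hp1 : p ≤ 1) : HasBernoulli F p := by
  rcases le_total p (1 / 2) with hp | hp
  · exact h.of_and hF hp0 hp (by linarith)
  · have h' := (h.of_and hF (c := 1 - p) (by linarith) (by linarith) (by linarith)).one_sub hF
      (by linarith)
    rwa [sub_sub_cancel] at h'

theorem of_mem_Ioo (hF : IsCharacteristic F) (h : HasBernoulli F p) (hp : p ∈ Set.Ioo 0 1)
    (hq0 : 0 ≤ q) (hq1 : q ≤ 1) : HasBernoulli F q := by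
  refine of_half hF ?_ hq0 hq1
  rcases le_total p (1 / 2) with hp2 | hp2
  · exact h.half_of_pos hF hp.1 hp2
  · exact (h.one_sub hF hp.1.le).half_of_pos hF (by linarith [hp.2]) (by linarith)

end HasBernoulli

theorem mem_idSys_bool_of_forall_hasBernoulli {F : MSys → Prop}
    (h : ∀ p : ℝ, 0 ≤ p → p ≤ 1 → HasBernoulli F p) (ν : Measure Bool)
    (hν : IsProbabilityMeasure ν) : F (idSys Bool ν hν) := by
  obtain ⟨ν', hν', hν'p, hF⟩ := h (ν.real {true}) measureReal_nonneg measureReal_le_one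
  obtain rfl : ν' = ν :=
    Measure.ext_of_apply_true (by rw [hν'p, measureReal_def, ENNReal.ofReal_toReal (by simp)])
  exact hF

theorem isIsoOf_pointSys_of_eq_dirac (W : MSys) {z₀ : W.Z} (h : W.μ = Measure.dirac z₀) :
    IsIsoOf W pointSys := by
  refine ⟨fun _ => PUnit.unit, ⟨measurable_const, ?_⟩, ae_of_all _ fun _ => rfl,
    fun _ => z₀, ⟨measurable_const, ?_⟩, ?_⟩
  · change W.μ.map (fun _ => PUnit.unit) = Measure.dirac PUnit.unit
    rw [Measure.map_const, measure_univ, one_smul]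
  · rw [h, Measure.map_const, measure_univ, one_smul]
  · rw [h]
    exact (ae_eq_dirac id).mono fun _ hz => hz.symm

theorem isZeroOneMeasure_of_prod_diagonal_eq_one {α : Type*} [MeasurableSpace α] [MeasurableEq α]
    {μ : Measure α} [IsProbabilityMeasure μ] (h : μ.prod μ (Set.diagonal α) = 1) :
    IsZeroOneMeasure μ := by
  refine ⟨fun s hs => ?_⟩
  have hoff : μ.prod μ (s ×ˢ sᶜ) = 0 :=
    measure_mono_null (fun x hx (hxΔ : x.1 = x.2) => hx.2 (hxΔ ▸ hx.1))
      ((prob_compl_eq_zero_iff measurableSet_diagonal).2 h)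
  rwa [Measure.prod_prod, mul_eq_zero, prob_compl_eq_zero_iff hs] at hoff

theorem prod_diagonal_lt_one_of_not_isIsoOf_pointSys {W : MSys} (hW : ¬ IsIsoOf W pointSys) :
    W.μ.prod W.μ (Set.diagonal W.Z) < 1 := by
  refine prob_le_one.lt_of_ne fun h => hW ?_
  have := isZeroOneMeasure_of_prod_diagonal_eq_one h
  obtain ⟨z₀, hz₀⟩ := IsZeroOneMeasure.exists_eq_dirac (μ := W.μ)
  exact isIsoOf_pointSys_of_eq_dirac W hz₀

section diagonalMixture

variable {α : Type*} [MeasurableSpace α] (μ : Measure α) [IsProbabilityMeasure μ]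

noncomputable def diagonalMixture : Measure (α × α) :=
  (2⁻¹ : ℝ≥0∞) • μ.prod μ + (2⁻¹ : ℝ≥0∞) • μ.map Function.diag

theorem isProbabilityMeasure_diagonalMixture : IsProbabilityMeasure (diagonalMixture μ) := by
  constructor
  rw [diagonalMixture, Measure.add_apply, Measure.smul_apply, Measure.smul_apply,
    Measure.map_apply measurable_diag MeasurableSet.univ]
  simp [ENNReal.inv_two_add_inv_two]

theorem diagonalMixture_map_fst : (diagonalMixture μ).map Prod.fst = μ := by
  rw [diagonalMixture, Measure.map_add _ _ measurable_fst, Measure.map_smul, Measure.map_smul,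
    Measure.map_map measurable_fst measurable_diag]
  simp [Function.comp_def, ← add_smul, ENNReal.inv_two_add_inv_two]

theorem diagonalMixture_map_snd : (diagonalMixture μ).map Prod.snd = μ := by
  rw [diagonalMixture, Measure.map_add _ _ measurable_snd, Measure.map_smul, Measure.map_smul,
    Measure.map_map measurable_snd measurable_diag]
  simp [Function.comp_def, ← add_smul, ENNReal.inv_two_add_inv_two]

theorem measurePreserving_prodMap_diagonalMixture {T : α → α} (hT : MeasurePreserving T μ μ) :
    MeasurePreserving (Prod.map T T) (diagonalMixture μ) (diagonalMixture μ) := by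
  refine ⟨hT.measurable.prodMap hT.measurable, ?_⟩
  rw [diagonalMixture, Measure.map_add _ _ (hT.measurable.prodMap hT.measurable),
    Measure.map_smul, Measure.map_smul, (hT.prod hT).map_eq,
    Measure.map_map (hT.measurable.prodMap hT.measurable) measurable_diag]
  change _ + _ • μ.map (Function.diag ∘ T) = _
  rw [← Measure.map_map measurable_diag hT.measurable, hT.map_eq]

theorem diagonalMixture_real_diagonal [MeasurableEq α] :
    (diagonalMixture μ).real (Set.diagonal α) =
      ((μ.prod μ).real (Set.diagonal α) + 1) / 2 := by
  rw [diagonalMixture, measureReal_add_apply (by simp; finiteness) (by simp; finiteness),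
    measureReal_ennreal_smul_apply, measureReal_ennreal_smul_apply,
    map_measureReal_apply measurable_diag measurableSet_diagonal,
    show Function.diag ⁻¹' Set.diagonal α = Set.univ from Set.eq_univ_of_forall fun _ => rfl]
  simp only [ENNReal.toReal_inv, ENNReal.toReal_ofNat, probReal_univ, mul_one]
  ring

end diagonalMixture

open scoped Classical in
theorem IsCharacteristic.exists_hasBernoulli_mem_Ioo {F : MSys → Prop} (hF : IsCharacteristic F)
    {W : MSys} (hW : F W) (hW1 : ¬ IsIsoOf W pointSys) :
    ∃ p ∈ Set.Ioo (0 : ℝ) 1, HasBernoulli F p := by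
  have := isProbabilityMeasure_diagonalMixture W.μ
  have hpre : (fun x : W.Z × W.Z => decide (x.1 = x.2)) ⁻¹' {true} = Set.diagonal W.Z := by
    ext
    simp
  have hf : Measurable fun x : W.Z × W.Z => decide (x.1 = x.2) :=
    measurable_to_bool (hpre ▸ measurableSet_diagonal)
  have hfκ : (diagonalMixture W.μ).map (fun x => decide (x.1 = x.2)) {true} =
      ENNReal.ofReal ((diagonalMixture W.μ).real (Set.diagonal W.Z)) := by
    rw [Measure.map_apply hf (measurableSet_singleton _), hpre, ofReal_measureReal]
  have ha0 : 0 ≤ (W.μ.prod W.μ).real (Set.diagonal W.Z) := measureReal_nonneg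
  have ha : (W.μ.prod W.μ).real (Set.diagonal W.Z) < 1 :=
    ENNReal.toReal_lt_of_lt_ofReal (by simpa using prod_diagonal_lt_one_of_not_isIsoOf_pointSys hW1)
  refine ⟨_, ⟨?_, ?_⟩, _, Measure.isProbabilityMeasure_map hf.aemeasurable, hfκ,
    hF.mem_idSys_of_selfJoining hW _ (measurePreserving_prodMap_diagonalMixture _ W.mp)
      (diagonalMixture_map_fst _) (diagonalMixture_map_snd _) _ hf
      (fun x => by simp [W.T.injective.eq_iff]) rfl⟩
  all_goals rw [diagonalMixture_real_diagonal]; linarith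

theorem IsCharacteristic.mem_idSys_of_measurableEmbedding {F : MSys → Prop}
    (hF : IsCharacteristic F) {Y : Type} [MeasurableSpace Y] [StandardBorelSpace Y]
    (hY : ∀ ν hν, F (idSys Y ν hν)) {Z : Type} [MeasurableSpace Z] [StandardBorelSpace Z]
    (μ : Measure Z) (hμ : IsProbabilityMeasure μ) {e : Z → Y} (he : MeasurableEmbedding e) :
    F (idSys Z μ hμ) := by
  obtain ⟨r, hr, hre⟩ :=
    he.exists_measurable_extend measurable_id fun _ => nonempty_of_isProbabilityMeasure μ
  exact hF.mem_idSys_of_invariant (hY (μ.map e) (Measure.isProbabilityMeasure_map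
    he.measurable.aemeasurable)) hμ hr (ae_of_all _ fun _ => rfl)
    (by change (μ.map e).map r = μ; rw [Measure.map_map hr he.measurable, hre, Measure.map_id])

/-- **ID is the smallest non-trivial characteristic class.** If a characteristic
class `F` contains a measure-theoretic dynamical system which is not isomorphic to
the one-point system, then `F` contains the identity automorphism of every
standard Borel probability space. -/
theorem identities_in_any_nontrivial_characteristic_class
    (F : MSys → Prop) (hF : IsCharacteristic F)
    (hne : ∃ W : MSys, F W ∧ ¬ IsIsoOf W pointSys) :
    ∀ (Z : Type) [MeasurableSpace Z] [StandardBorelSpace Z]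
      (μ : Measure Z) (hp : IsProbabilityMeasure μ), F (idSys Z μ hp) := by
  obtain ⟨W, hW, hW1⟩ := hne
  obtain ⟨p, hp, hFp⟩ := hF.exists_hasBernoulli_mem_Ioo hW hW1
  have hbool : ∀ ν hν, F (idSys Bool ν hν) :=
    mem_idSys_bool_of_forall_hasBernoulli fun q hq0 hq1 => hFp.of_mem_Ioo hF hp hq0 hq1
  have hcantor : ∀ ν hν, F (idSys (ℕ → Bool) ν hν) :=
    fun ν _ => hF.mem_idSys_pi ν fun _ => hbool _ _
  intro Z _ _ μ hμ
  exact hF.mem_idSys_of_measurableEmbedding hcantor μ hμ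
    ((MeasurableSpace.measurable_mapNatBool Z).measurableEmbedding
      (MeasurableSpace.injective_mapNatBool Z))
end

section
/- Every automorphism of a standard Borel probability space is a measure-theoretic factor of some 2-fold self-joining of the infinite-entropy Bernoulli shift ([0,1]^ℤ, Leb^{⊗ℤ}, S), where S is the left shift. That is, for every automorphism R of a standard Borel probability space there exists a shift×shift-invariant measure ρ on [0,1]^ℤ × [0,1]^ℤ with both marginals equal to Leb^{⊗ℤ} such that R is isomorphic to a factor of the system ([0,1]^ℤ × [0,1]^ℤ, ρ, S × S). -/
open MeasureTheory Filter Topology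
open scoped ENNReal

/-- The left shift on `α^ℤ`, as a measurable equivalence. -/
def shiftE (α : Type) [MeasurableSpace α] : (ℤ → α) ≃ᵐ (ℤ → α) where
  toFun := fun v k => v (k + 1)
  invFun := fun v k => v (k - 1)
  left_inv := by intro v; funext k; simp
  right_inv := by intro v; funext k; simp
  measurable_toFun := measurable_pi_lambda _ (fun k => measurable_pi_apply (k + 1))
  measurable_invFun := measurable_pi_lambda _ (fun k => measurable_pi_apply (k - 1))

/-- The shift `S × S` on `[0,1]^ℤ × [0,1]^ℤ`. -/
def twoShiftE : ((ℤ → unitInterval) × (ℤ → unitInterval)) ≃ᵐ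
    ((ℤ → unitInterval) × (ℤ → unitInterval)) :=
  (shiftE unitInterval).prodCongr (shiftE unitInterval)

/-- The system obtained from a 2-fold self-joining `ρ` of the Bernoulli shift
`([0,1]^ℤ, Leb^{⊗ℤ}, S)`. -/
noncomputable def joinedBernoulliSys
    (ρ : Measure ((ℤ → unitInterval) × (ℤ → unitInterval)))
    (hρ : IsProbabilityMeasure ρ) (hinv : MeasurePreserving twoShiftE ρ ρ) : MSys :=
  { Z := (ℤ → unitInterval) × (ℤ → unitInterval), μ := ρ, prob := hρ,
    T := twoShiftE, mp := hinv }

/-!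
Embed the state space of `R` measurably into the circle `ℝ/ℤ` by `e`. Given a Bernoulli
sequence `x` and a point `z`, rotate each coordinate `x n` (mod 1) by `e (Tⁿ z)`. Rotations
preserve Lebesgue measure, so for every fixed `z` the rotated sequence `y` is again Bernoulli;
hence the law of `(x, y)` under `μ ⊗ Leb^{⊗ℤ}` is a self-joining. The coding intertwines
`T × S` with `S × S`, and `z` is read off from the single coordinate difference `y 0 - x 0`.
-/

open Set

namespace unitInterval

noncomputable def toCircle (t : I) : UnitAddCircle := (t : ℝ)

noncomputable def ofCircle (a : UnitAddCircle) : I :=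
  ⟨AddCircle.equivIco 1 0 a, Ico_subset_Icc_self (by simpa using (AddCircle.equivIco 1 0 a).2)⟩

@[fun_prop]
lemma measurable_toCircle : Measurable toCircle :=
  AddCircle.measurable_mk'.comp measurable_subtype_coe

lemma measurable_ofCircle : Measurable ofCircle :=
  (measurable_subtype_coe.comp (AddCircle.measurableEquivIco 1 0).measurable).subtype_mk

lemma toCircle_ofCircle (a : UnitAddCircle) : toCircle (ofCircle a) = a :=
  (AddCircle.equivIco 1 0).symm_apply_apply a

lemma ofCircle_toCircle {t : I} (ht : t ≠ 1) : ofCircle (toCircle t) = t := by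
  ext
  rw [ofCircle, toCircle, AddCircle.coe_equivIco_mk_apply, div_one, mul_one,
    Int.fract_eq_self]
  exact ⟨t.2.1, lt_of_le_of_ne t.2.2 (by simpa [← Subtype.ext_iff] using ht)⟩

lemma measurePreserving_toCircle : MeasurePreserving toCircle volume volume := by
  have h := UnitAddCircle.measurePreserving_mk 0
  rw [zero_add, Measure.restrict_congr_set Ioc_ae_eq_Icc] at h
  exact h.comp measurePreserving_coe

lemma measurePreserving_ofCircle : MeasurePreserving ofCircle volume volume := by
  refine ⟨measurable_ofCircle, ?_⟩
  have hid : ofCircle ∘ toCircle =ᵐ[volume] id :=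
    (measure_eq_zero_iff_ae_notMem.1 (measure_singleton (1 : I))).mono
      fun t ht => ofCircle_toCircle ht
  rw [← measurePreserving_toCircle.map_eq,
    Measure.map_map measurable_ofCircle measurable_toCircle, Measure.map_congr hid, Measure.map_id]

noncomputable def rotate (c : UnitAddCircle) (t : I) : I := ofCircle (c + toCircle t)

lemma measurable_rotate : Measurable (Function.uncurry rotate) :=
  measurable_ofCircle.comp (measurable_fst.add (measurable_toCircle.comp measurable_snd))

lemma measurePreserving_rotate (c : UnitAddCircle) :
    MeasurePreserving (rotate c) volume volume :=
  measurePreserving_ofCircle.comp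
    ((measurePreserving_add_left volume c).comp measurePreserving_toCircle)

lemma toCircle_rotate_sub (c : UnitAddCircle) (t : I) :
    toCircle (rotate c t) - toCircle t = c := by
  rw [rotate, toCircle_ofCircle, add_sub_cancel_right]

end unitInterval

section Bernoulli

open Measure

lemma measurePreserving_infinitePi_pi {ι : Type*} {X Y : ι → Type*}
    [∀ i, MeasurableSpace (X i)] [∀ i, MeasurableSpace (Y i)]
    {μ : ∀ i, Measure (X i)} {ν : ∀ i, Measure (Y i)}
    [∀ i, IsProbabilityMeasure (μ i)] {f : ∀ i, X i → Y i}
    (hf : ∀ i, MeasurePreserving (f i) (μ i) (ν i)) :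
    MeasurePreserving (fun x i => f i (x i)) (infinitePi μ) (infinitePi ν) := by
  refine ⟨measurable_pi_lambda _ fun i => (hf i).measurable.comp (measurable_pi_apply i), ?_⟩
  rw [infinitePi_map_pi _ fun i => (hf i).measurable]
  simp_rw [(hf _).map_eq]

lemma shiftE_eq_piCongrLeft (α : Type) [MeasurableSpace α] :
    shiftE α = MeasurableEquiv.piCongrLeft (fun _ => α) (Equiv.subRight (1 : ℤ)) := by
  ext v k
  simp [shiftE, MeasurableEquiv.coe_piCongrLeft, Equiv.piCongrLeft_apply]

lemma measurePreserving_shiftE_infinitePi {α : Type} [MeasurableSpace α] (ν : Measure α)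
    [IsProbabilityMeasure ν] :
    MeasurePreserving (shiftE α) (infinitePi fun _ : ℤ => ν) (infinitePi fun _ => ν) := by
  refine ⟨(shiftE α).measurable, ?_⟩
  rw [shiftE_eq_piCongrLeft]
  exact infinitePi_map_piCongrLeft (fun _ => ν) _

end Bernoulli

lemma not_countable_unitAddCircle : ¬ Countable UnitAddCircle := by
  intro h
  have : Countable (Ico (0:ℝ) (0 + 1)) := (AddCircle.equivIco 1 0).symm.injective.countable
  rw [← Cardinal.mk_le_aleph0_iff, Cardinal.mk_Ico_real (by norm_num)] at this
  exact Cardinal.aleph0_lt_continuum.not_ge this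

lemma exists_measurableEmbedding_unitAddCircle (Z : Type*) [MeasurableSpace Z]
    [StandardBorelSpace Z] : ∃ e : Z → UnitAddCircle, MeasurableEmbedding e := by
  obtain ⟨f, hf⟩ := exists_measurableEmbedding_real Z
  let φ : ℝ ≃ᵐ UnitAddCircle :=
    PolishSpace.measurableEquivOfNotCountable not_countable not_countable_unitAddCircle
  exact ⟨φ ∘ f, φ.measurableEmbedding.comp hf⟩

lemma MeasurableEquiv.measurable_zpow_apply {α : Type*} [MeasurableSpace α] (T : α ≃ᵐ α)
    (n : ℤ) : Measurable ⇑(T.toEquiv ^ n) := by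
  induction n using Int.induction_on with
  | zero => exact measurable_id
  | succ k ih => rw [zpow_add_one, Equiv.Perm.coe_mul]; exact ih.comp T.measurable
  | pred k ih => rw [zpow_sub_one, Equiv.Perm.coe_mul]; exact ih.comp T.symm.measurable

lemma IsFactorOf.of_map_eq {R X : MSys} {W : Type*} [MeasurableSpace W] {m : Measure W}
    {Θ : W → X.Z} {π : X.Z → R.Z} (hX : m.map Θ = X.μ) (hΘ : Measurable Θ) (hπ : Measurable π)
    (hq : MeasurePreserving (π ∘ Θ) m R.μ) (h : ∀ w, π (X.T (Θ w)) = R.T (π (Θ w))) :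
    IsFactorOf R X := by
  refine ⟨π, hX ▸ hq.map_of_comp hπ hΘ, ?_⟩
  rw [← hX]
  exact (ae_map_iff hΘ.aemeasurable
    (measurableSet_eq_fun (hπ.comp X.T.measurable) (R.T.measurable.comp hπ))).2 (.of_forall h)

section SkewProduct

open unitInterval

local notation "𝔹" => Measure.infinitePi (fun _ : ℤ => (volume : Measure unitInterval))

variable {Z : Type*} [MeasurableSpace Z] (T : Z ≃ᵐ Z) (e : Z → UnitAddCircle)

noncomputable def codedRotation (z : Z) (x : ℤ → I) : ℤ → I :=
  fun n => rotate (e ((T.toEquiv ^ n) z)) (x n)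

noncomputable def skewCode (p : Z × (ℤ → I)) : (ℤ → I) × (ℤ → I) :=
  (p.2, codedRotation T e p.1 p.2)

variable {e}

lemma measurable_codedRotation (he : Measurable e) :
    Measurable (Function.uncurry (codedRotation T e)) :=
  measurable_pi_lambda _ fun n => measurable_rotate.comp
    (((he.comp (T.measurable_zpow_apply n)).comp measurable_fst).prodMk
      ((measurable_pi_apply n).comp measurable_snd))

lemma measurable_skewCode (he : Measurable e) : Measurable (skewCode T e) :=
  measurable_snd.prodMk (measurable_codedRotation T he)

lemma measurePreserving_codedRotation (z : Z) : MeasurePreserving (codedRotation T e z) 𝔹 𝔹 :=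
  measurePreserving_infinitePi_pi fun _ => measurePreserving_rotate _

lemma codedRotation_apply_shiftE (z : Z) (x : ℤ → I) :
    codedRotation T e (T z) (shiftE I x) = shiftE I (codedRotation T e z x) := by
  funext n
  simp only [codedRotation, shiftE, MeasurableEquiv.coe_mk, Equiv.coe_fn_mk, zpow_add_one,
    Equiv.Perm.coe_mul, Function.comp_apply]
  rfl

lemma skewCode_semiconj : Function.Semiconj (skewCode T e) (Prod.map T (shiftE I)) twoShiftE :=
  fun p => by
    simp only [skewCode, Prod.map, codedRotation_apply_shiftE]
    rfl

lemma toCircle_skewCode_sub (p : Z × (ℤ → I)) :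
    toCircle ((skewCode T e p).2 0) - toCircle ((skewCode T e p).1 0) = e p.1 := by
  simp [skewCode, codedRotation, toCircle_rotate_sub]

noncomputable def skewDecode (g : UnitAddCircle → Z) (p : (ℤ → I) × (ℤ → I)) : Z :=
  g (toCircle (p.2 0) - toCircle (p.1 0))

lemma measurable_skewDecode {g : UnitAddCircle → Z} (hg : Measurable g) :
    Measurable (skewDecode g) :=
  hg.comp (by fun_prop)

lemma skewDecode_comp_skewCode {g : UnitAddCircle → Z} (hge : g ∘ e = id) :
    skewDecode g ∘ skewCode T e = Prod.fst :=
  funext fun p => by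
    simp only [Function.comp_apply, skewDecode, toCircle_skewCode_sub]
    exact congrFun hge p.1

lemma skewDecode_twoShiftE_skewCode {g : UnitAddCircle → Z} (hge : g ∘ e = id)
    (p : Z × (ℤ → I)) :
    skewDecode g (twoShiftE (skewCode T e p)) = T (skewDecode g (skewCode T e p)) := by
  rw [← skewCode_semiconj T p]
  exact (congrFun (skewDecode_comp_skewCode T hge) _).trans
    (congrArg T (congrFun (skewDecode_comp_skewCode T hge) p)).symm

variable (μ : Measure Z) [IsProbabilityMeasure μ]

lemma map_skewCode_fst (he : Measurable e) :
    ((μ.prod 𝔹).map (skewCode T e)).map Prod.fst = 𝔹 := by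
  rw [Measure.map_map measurable_fst (measurable_skewCode T he)]
  exact measurePreserving_snd.map_eq

lemma map_skewCode_snd (he : Measurable e) :
    ((μ.prod 𝔹).map (skewCode T e)).map Prod.snd = 𝔹 := by
  rw [Measure.map_map measurable_snd (measurable_skewCode T he)]
  have hskew : MeasurePreserving (fun p : Z × (ℤ → I) => (p.1, codedRotation T e p.1 p.2))
      (μ.prod 𝔹) (μ.prod 𝔹) :=
    (MeasurePreserving.id μ).skew_product (measurable_codedRotation T he)
      (.of_forall fun z => (measurePreserving_codedRotation T z).map_eq)
  exact (measurePreserving_snd.comp hskew).map_eq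

lemma measurePreserving_twoShiftE_map_skewCode (he : Measurable e)
    (hT : MeasurePreserving T μ μ) :
    MeasurePreserving twoShiftE ((μ.prod 𝔹).map (skewCode T e))
      ((μ.prod 𝔹).map (skewCode T e)) :=
  MeasurePreserving.of_semiconj ⟨measurable_skewCode T he, rfl⟩
    (hT.prod (measurePreserving_shiftE_infinitePi volume)) (skewCode_semiconj T)
    twoShiftE.measurable

theorem exists_selfJoining_bernoulli_isFactorOf (R : MSys) :
    ∃ (ρ : Measure ((ℤ → I) × (ℤ → I))) (hρ : IsProbabilityMeasure ρ)
      (hinv : MeasurePreserving twoShiftE ρ ρ),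
      ρ.map Prod.fst = 𝔹 ∧ ρ.map Prod.snd = 𝔹 ∧ IsFactorOf R (joinedBernoulliSys ρ hρ hinv) := by
  obtain ⟨e, he⟩ := exists_measurableEmbedding_unitAddCircle R.Z
  obtain ⟨g, hg, hge⟩ :=
    he.exists_measurable_extend measurable_id fun _ => nonempty_of_isProbabilityMeasure R.μ
  have hΘ := measurable_skewCode R.T he.measurable
  refine ⟨_, Measure.isProbabilityMeasure_map hΘ.aemeasurable,
    measurePreserving_twoShiftE_map_skewCode R.T R.μ he.measurable R.mp,
    map_skewCode_fst R.T R.μ he.measurable, map_skewCode_snd R.T R.μ he.measurable,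
    IsFactorOf.of_map_eq rfl hΘ (measurable_skewDecode hg) ?_ fun p => ?_⟩
  · exact skewDecode_comp_skewCode R.T hge ▸ measurePreserving_fst
  · exact skewDecode_twoShiftE_skewCode R.T hge p

end SkewProduct

theorem factor_of_self_joining_of_bernoulli_general
    (lam : Measure (ℤ → unitInterval))
    (hprod : ∀ (s : Finset ℤ) (A : ℤ → Set unitInterval), (∀ i, MeasurableSet (A i)) →
      lam {x | ∀ i ∈ s, x i ∈ A i} = ∏ i ∈ s, volume (A i))
    (R : MSys) :
    ∃ (ρ : Measure ((ℤ → unitInterval) × (ℤ → unitInterval)))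
      (hρ : IsProbabilityMeasure ρ) (hinv : MeasurePreserving twoShiftE ρ ρ),
      ρ.map Prod.fst = lam ∧ ρ.map Prod.snd = lam ∧
      IsFactorOf R (joinedBernoulliSys ρ hρ hinv) := by
  obtain rfl := Measure.eq_infinitePi _ hprod
  exact exists_selfJoining_bernoulli_isFactorOf R

/-- **Every automorphism of a standard Borel probability space is a factor of a
2-fold self-joining of the infinite-entropy Bernoulli shift `([0,1]^ℤ, Leb^{⊗ℤ}, S)`.**
Here `lam` is the product measure `Leb^{⊗ℤ}` on `[0,1]^ℤ`, characterized by its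
values on cylinder sets. -/
theorem factor_of_self_joining_of_bernoulli
    (lam : Measure (ℤ → unitInterval)) (hprob : IsProbabilityMeasure lam)
    (hprod : ∀ (s : Finset ℤ) (A : ℤ → Set unitInterval), (∀ i, MeasurableSet (A i)) →
      lam {x | ∀ i ∈ s, x i ∈ A i} = ∏ i ∈ s, volume (A i))
    (R : MSys) :
    ∃ (ρ : Measure ((ℤ → unitInterval) × (ℤ → unitInterval)))
      (hρ : IsProbabilityMeasure ρ) (hinv : MeasurePreserving twoShiftE ρ ρ),
      ρ.map Prod.fst = lam ∧ ρ.map Prod.snd = lam ∧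
      IsFactorOf R (joinedBernoulliSys ρ hρ hinv) :=
  factor_of_self_joining_of_bernoulli_general lam hprod R
end

section
/- Let (N_ℓ) be an increasing sequence of positive integers, k ∈ ℕ, and let a, b₁, …, b_k : ℕ → ℂ be sequences bounded by 1. Assume that lim_{H→∞} limsup_{ℓ→∞} (1/H) Σ_{h≤H} (1/N_ℓ) |Σ_{n≤N_ℓ} a(n)·conj(a(n+h))| = 0. Then lim_{H→∞} limsup_{ℓ→∞} (1/H^k) Σ_{h₁,…,h_k ≤ H} (1/N_ℓ) |Σ_{n≤N_ℓ} a(n) Π_{i=1}^{k} b_i(n+h_i)| = 0. -/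
/-!
Averaging over the shifts `n ↦ n + s`, `1 ≤ s ≤ H`, moves every tuple `h ∈ [1, H]ᵏ` to
`h + s ∈ [1, 2H]ᵏ` at a cost `O(H / N)`, so for each fixed `g ∈ [1, 2H]ᵏ` one has to bound
`∑_{s ≤ H} |∑_{n ≤ N} a(n + s) B_g(n)|` with `|B_g| ≤ 1`. Choosing unimodular phases and applying
Cauchy–Schwarz in `n` bounds this by `(N ∑_{s,t ≤ H} |∑_{n ≤ N} a(n + s) conj a(n + t)|)^{1/2}`, and
shifting once more each of these correlations is, up to `O(H)`, the self-correlation of `a` at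
`|t - s|`. Altogether
`avgMultCorr ≤ 2ᵏ (2/H + 2 avgAutocorr + 4(H + 1)/N)^{1/2} + 2(H + 1)/N`,
and letting first `ℓ → ∞` and then `H → ∞` gives the theorem.
-/

open Filter Finset Topology
open scoped ComplexConjugate

lemma norm_prod_le_one {ι 𝕜 : Type*} [NormedField 𝕜] (s : Finset ι) {f : ι → 𝕜}
    (hf : ∀ i ∈ s, ‖f i‖ ≤ 1) : ‖∏ i ∈ s, f i‖ ≤ 1 := by
  rw [norm_prod]
  exact prod_le_one (fun i _ => norm_nonneg _) hf

lemma norm_sum_Icc_le {E : Type*} [SeminormedAddCommGroup E] {f : ℕ → E}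
    (hf : ∀ n, ‖f n‖ ≤ 1) (N : ℕ) : ‖∑ n ∈ Icc 1 N, f n‖ ≤ N := by
  simpa using norm_sum_le_of_le (Icc 1 N) fun n _ => hf n

lemma inv_natCast_mul_norm_sum_Icc_le_one {E : Type*} [SeminormedAddCommGroup E] {f : ℕ → E}
    (hf : ∀ n, ‖f n‖ ≤ 1) (N : ℕ) : (N : ℝ)⁻¹ * ‖∑ n ∈ Icc 1 N, f n‖ ≤ 1 :=
  inv_mul_le_one_of_le₀ (norm_sum_Icc_le hf N) (Nat.cast_nonneg N)

lemma inv_card_mul_sum_le_one {ι : Type*} (s : Finset ι) {f : ι → ℝ} (hf : ∀ i ∈ s, f i ≤ 1) :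
    (#s : ℝ)⁻¹ * ∑ i ∈ s, f i ≤ 1 :=
  inv_mul_le_one_of_le₀ (by simpa using sum_le_card_nsmul s f 1 hf) (Nat.cast_nonneg _)

lemma sum_Icc_add_one_sub_sum_Icc {G : Type*} [AddCommGroup G] (g : ℕ → G) (N : ℕ) :
    ∑ n ∈ Icc 1 N, g (n + 1) - ∑ n ∈ Icc 1 N, g n = g (N + 1) - g 1 := by
  induction N with
  | zero => simp
  | succ N ih =>
    rw [sum_Icc_succ_top (by omega), sum_Icc_succ_top (by omega), add_sub_add_comm, ih]
    abel

lemma norm_sum_Icc_add_sub_sum_Icc_le {E : Type*} [SeminormedAddCommGroup E] {f : ℕ → E}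
    (hf : ∀ n, ‖f n‖ ≤ 1) (N s : ℕ) :
    ‖∑ n ∈ Icc 1 N, f (n + s) - ∑ n ∈ Icc 1 N, f n‖ ≤ 2 * s := by
  induction s with
  | zero => simp
  | succ s ih =>
    have telescope := sum_Icc_add_one_sub_sum_Icc (fun n => f (n + s)) N
    simp_rw [show ∀ n, n + (s + 1) = n + 1 + s from fun n => by omega]
    calc ‖∑ n ∈ Icc 1 N, f (n + 1 + s) - ∑ n ∈ Icc 1 N, f n‖
        = ‖(f (N + 1 + s) - f (1 + s)) + (∑ n ∈ Icc 1 N, f (n + s) - ∑ n ∈ Icc 1 N, f n)‖ := by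
          rw [← telescope, sub_add_sub_cancel]
      _ ≤ (1 + 1) + 2 * s := norm_add_le_of_le (norm_sub_le_of_le (hf _) (hf _)) ih
      _ = 2 * ↑(s + 1) := by push_cast; ring

lemma exists_norm_le_one_mul_eq_norm {𝕜 : Type*} [RCLike 𝕜] (z : 𝕜) :
    ∃ c : 𝕜, ‖c‖ ≤ 1 ∧ c * z = ‖z‖ := by
  rcases eq_or_ne z 0 with rfl | hz
  · exact ⟨0, by simp⟩
  refine ⟨conj z / ‖z‖, ?_, ?_⟩
  · simp [norm_div, div_self (norm_ne_zero_iff.2 hz)]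
  · rw [div_mul_eq_mul_div, RCLike.conj_mul, sq, mul_div_assoc,
      div_self (RCLike.ofReal_ne_zero.2 (norm_ne_zero_iff.2 hz)), mul_one]

lemma sum_norm_sum_mul_sq_le {ι κ 𝕜 : Type*} [RCLike 𝕜] (S : Finset ι) (I : Finset κ)
    (x : ι → κ → 𝕜) {c : ι → 𝕜} (hc : ∀ s ∈ S, ‖c s‖ ≤ 1) :
    ∑ n ∈ I, ‖∑ s ∈ S, c s * x s n‖ ^ 2 ≤
      ∑ s ∈ S, ∑ t ∈ S, ‖∑ n ∈ I, x s n * conj (x t n)‖ := by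
  have expand : ((∑ n ∈ I, ‖∑ s ∈ S, c s * x s n‖ ^ 2 : ℝ) : 𝕜) =
      ∑ s ∈ S, ∑ t ∈ S, c s * conj (c t) * ∑ n ∈ I, x s n * conj (x t n) := by
    push_cast
    simp only [← RCLike.mul_conj, map_sum, map_mul, sum_mul_sum]
    rw [sum_comm]
    refine sum_congr rfl fun s _ => ?_
    rw [sum_comm]
    exact sum_congr rfl fun t _ => by rw [mul_sum]; exact sum_congr rfl fun n _ => by ring
  calc ∑ n ∈ I, ‖∑ s ∈ S, c s * x s n‖ ^ 2
      = ‖((∑ n ∈ I, ‖∑ s ∈ S, c s * x s n‖ ^ 2 : ℝ) : 𝕜)‖ := by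
        rw [RCLike.norm_ofReal, abs_of_nonneg (by positivity)]
    _ ≤ ∑ s ∈ S, ∑ t ∈ S, ‖c s * conj (c t) * ∑ n ∈ I, x s n * conj (x t n)‖ := by
        rw [expand]
        exact (norm_sum_le _ _).trans (sum_le_sum fun s _ => norm_sum_le _ _)
    _ ≤ _ := by
        gcongr with s hs t ht
        rw [norm_mul, norm_mul, RCLike.norm_conj]
        exact mul_le_of_le_one_left (norm_nonneg _) (mul_le_one₀ (hc s hs) (norm_nonneg _) (hc t ht))

lemma sum_norm_sum_mul_le_sqrt {ι κ 𝕜 : Type*} [RCLike 𝕜] (S : Finset ι) (I : Finset κ)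
    (x : ι → κ → 𝕜) {u : κ → 𝕜} (hu : ∀ n ∈ I, ‖u n‖ ≤ 1) :
    ∑ s ∈ S, ‖∑ n ∈ I, x s n * u n‖ ≤
      √(#I * ∑ s ∈ S, ∑ t ∈ S, ‖∑ n ∈ I, x s n * conj (x t n)‖) := by
  choose c hc1 hc using fun s => exists_norm_le_one_mul_eq_norm (∑ n ∈ I, x s n * u n)
  set w : κ → 𝕜 := fun n => ∑ s ∈ S, c s * x s n
  have dual : ((∑ s ∈ S, ‖∑ n ∈ I, x s n * u n‖ : ℝ) : 𝕜) = ∑ n ∈ I, w n * u n := by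
    push_cast
    simp only [← hc, w, mul_sum, sum_mul]
    rw [sum_comm]
    exact sum_congr rfl fun n _ => sum_congr rfl fun s _ => by ring
  have h1 : ∑ s ∈ S, ‖∑ n ∈ I, x s n * u n‖ ≤ ∑ n ∈ I, ‖w n‖ := by
    calc ∑ s ∈ S, ‖∑ n ∈ I, x s n * u n‖
        = ‖((∑ s ∈ S, ‖∑ n ∈ I, x s n * u n‖ : ℝ) : 𝕜)‖ := by
          rw [RCLike.norm_ofReal, abs_of_nonneg (by positivity)]
      _ ≤ ∑ n ∈ I, ‖w n * u n‖ := dual ▸ norm_sum_le _ _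
      _ ≤ ∑ n ∈ I, ‖w n‖ := sum_le_sum fun n hn => by
          rw [norm_mul]; exact mul_le_of_le_one_right (norm_nonneg _) (hu n hn)
  rw [Real.le_sqrt (by positivity) (by positivity)]
  calc (∑ s ∈ S, ‖∑ n ∈ I, x s n * u n‖) ^ 2 ≤ (∑ n ∈ I, ‖w n‖) ^ 2 := by gcongr
    _ ≤ #I * ∑ n ∈ I, ‖w n‖ ^ 2 := sq_sum_le_card_mul_sum_sq
    _ ≤ _ := by gcongr; exact sum_norm_sum_mul_sq_le S I x fun s _ => hc1 s

lemma sum_sum_le_two_mul_sum_sum_filter_le {α : Type*} [LinearOrder α] (A : Finset α)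
    {F : α → α → ℝ} (hF0 : ∀ s t, 0 ≤ F s t) (hF : ∀ s t, F s t = F t s) :
    ∑ s ∈ A, ∑ t ∈ A, F s t ≤ 2 * ∑ s ∈ A, ∑ t ∈ A with s ≤ t, F s t := by
  set G : α → α → ℝ := fun s t => if s ≤ t then F s t else 0
  calc ∑ s ∈ A, ∑ t ∈ A, F s t ≤ ∑ s ∈ A, ∑ t ∈ A, (G s t + G t s) := by
        gcongr with s _ t _
        rcases lt_trichotomy s t with h | rfl | h
        · simp [G, h.le, h.not_ge]
        · simp [G, hF0 s s]
        · simp [G, h.le, h.not_ge, hF s t]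
    _ = 2 * ∑ s ∈ A, ∑ t ∈ A, G s t := by
        simp only [sum_add_distrib]
        rw [sum_comm (f := fun s t => G t s), two_mul]
    _ = 2 * ∑ s ∈ A, ∑ t ∈ A with s ≤ t, F s t := by simp only [G, sum_filter]

lemma sum_filter_Icc_le_sub_le_sum_range {φ : ℕ → ℝ} (hφ : ∀ d, 0 ≤ φ d) {s : ℕ} (hs : 1 ≤ s)
    (H : ℕ) : ∑ t ∈ Icc 1 H with s ≤ t, φ (t - s) ≤ ∑ d ∈ range (H + 1), φ d := by
  have hfilter : {t ∈ Icc 1 H | s ≤ t} = Ico s (H + 1) := by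
    ext t
    simp only [mem_filter, mem_Icc, mem_Ico]
    omega
  rw [hfilter, sum_Ico_eq_sum_range]
  simpa using sum_le_sum_of_subset_of_nonneg (range_subset_range.2 (Nat.sub_le (H + 1) s))
    fun d _ _ => hφ d

lemma sum_piFinset_Icc_add_le {ι : Type*} [Fintype ι] [DecidableEq ι] {φ : (ι → ℕ) → ℝ}
    (hφ : ∀ g, 0 ≤ φ g) {s H : ℕ} (hs : s ≤ H) :
    ∑ h ∈ Fintype.piFinset (fun _ : ι => Icc 1 H), φ (fun i => h i + s) ≤
      ∑ g ∈ Fintype.piFinset (fun _ : ι => Icc 1 (2 * H)), φ g := by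
  refine (sum_map _ (addRightEmbedding fun _ => s) φ).symm.trans_le
    (sum_le_sum_of_subset_of_nonneg ?_ fun g _ _ => hφ g)
  intro g hg
  obtain ⟨h, hh, rfl⟩ := mem_map.1 hg
  simp only [Fintype.mem_piFinset, mem_Icc, addRightEmbedding_apply, Pi.add_apply] at hh ⊢
  intro i
  have := hh i
  omega

section Autocorrelation

variable {a : ℕ → ℂ} (ha : ∀ n, ‖a n‖ ≤ 1)
include ha

lemma norm_sum_shift_mul_conj_le (N : ℕ) {s t : ℕ} (hst : s ≤ t) :
    ‖∑ n ∈ Icc 1 N, a (n + s) * conj (a (n + t))‖ ≤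
      ‖∑ n ∈ Icc 1 N, a n * conj (a (n + (t - s)))‖ + 2 * s := by
  set f : ℕ → ℂ := fun m => a m * conj (a (m + (t - s)))
  have hf : ∀ m, ‖f m‖ ≤ 1 := fun m => by
    simpa [f] using mul_le_one₀ (ha m) (norm_nonneg _) (ha (m + (t - s)))
  have hshift : ∀ n, a (n + s) * conj (a (n + t)) = f (n + s) := fun n => by
    simp only [f, show n + s + (t - s) = n + t by omega]
  simp only [hshift]
  linarith [norm_le_norm_add_norm_sub' (∑ n ∈ Icc 1 N, f (n + s)) (∑ n ∈ Icc 1 N, f n),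
    norm_sum_Icc_add_sub_sum_Icc_le hf N s]

lemma sum_sum_norm_shift_mul_conj_le (N H : ℕ) :
    ∑ s ∈ Icc 1 H, ∑ t ∈ Icc 1 H, ‖∑ n ∈ Icc 1 N, a (n + s) * conj (a (n + t))‖ ≤
      2 * H * (N + ∑ d ∈ Icc 1 H, ‖∑ n ∈ Icc 1 N, a n * conj (a (n + d))‖) +
        4 * H ^ 2 * (H + 1) := by
  set C : ℕ → ℝ := fun d => ‖∑ n ∈ Icc 1 N, a n * conj (a (n + d))‖
  have hsymm : ∀ s t, ‖∑ n ∈ Icc 1 N, a (n + s) * conj (a (n + t))‖ =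
      ‖∑ n ∈ Icc 1 N, a (n + t) * conj (a (n + s))‖ := fun s t => by
    rw [← RCLike.norm_conj, map_sum]
    simp only [map_mul, RCLike.conj_conj, mul_comm]
  have hrow : ∀ s ∈ Icc 1 H, ∑ t ∈ Icc 1 H with s ≤ t,
      ‖∑ n ∈ Icc 1 N, a (n + s) * conj (a (n + t))‖ ≤ ∑ d ∈ range (H + 1), (C d + 2 * H) := by
    intro s hs
    have hsH : (s : ℝ) ≤ H := by exact_mod_cast (mem_Icc.1 hs).2
    calc ∑ t ∈ Icc 1 H with s ≤ t, ‖∑ n ∈ Icc 1 N, a (n + s) * conj (a (n + t))‖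
        ≤ ∑ t ∈ Icc 1 H with s ≤ t, (C (t - s) + 2 * H) := by
          gcongr with t ht
          linarith [norm_sum_shift_mul_conj_le ha N (mem_filter.1 ht).2]
      _ ≤ ∑ d ∈ range (H + 1), (C d + 2 * H) :=
          sum_filter_Icc_le_sub_le_sum_range (φ := fun d => C d + 2 * H)
            (fun d => add_nonneg (norm_nonneg _) (by positivity)) (mem_Icc.1 hs).1 H
  have hdiag : ∑ d ∈ range (H + 1), C d ≤ N + ∑ d ∈ Icc 1 H, C d := by
    rw [range_eq_Ico, sum_eq_sum_Ico_succ_bot (by omega), Ico_add_one_right_eq_Icc]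
    gcongr
    simpa [C] using norm_sum_Icc_le (f := fun n => a n * conj (a n))
      (fun n => by simpa using mul_le_one₀ (ha n) (norm_nonneg _) (ha n)) N
  calc ∑ s ∈ Icc 1 H, ∑ t ∈ Icc 1 H, ‖∑ n ∈ Icc 1 N, a (n + s) * conj (a (n + t))‖
      ≤ 2 * ∑ s ∈ Icc 1 H, ∑ t ∈ Icc 1 H with s ≤ t,
          ‖∑ n ∈ Icc 1 N, a (n + s) * conj (a (n + t))‖ :=
        sum_sum_le_two_mul_sum_sum_filter_le _ (fun _ _ => norm_nonneg _) hsymm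
    _ ≤ 2 * ∑ s ∈ Icc 1 H, ∑ d ∈ range (H + 1), (C d + 2 * H) := by
        gcongr with s hs
        exact hrow s hs
    _ = 2 * H * (∑ d ∈ range (H + 1), C d + 2 * H * (H + 1)) := by
        simp only [sum_add_distrib, sum_const, card_range, nsmul_eq_mul, Nat.card_Icc,
          add_tsub_cancel_right, Nat.cast_add, Nat.cast_one]
        ring
    _ ≤ _ := by linarith [mul_le_mul_of_nonneg_left hdiag (by positivity : (0 : ℝ) ≤ 2 * H)]

end Autocorrelation

section MultipleCorrelation

variable {ι : Type*} [Fintype ι] {a : ℕ → ℂ} {b : ι → ℕ → ℂ}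
  (ha : ∀ n, ‖a n‖ ≤ 1) (hb : ∀ i n, ‖b i n‖ ≤ 1)
include ha hb

lemma norm_mul_prod_le_one (n : ℕ) (h : ι → ℕ) : ‖a n * ∏ i, b i (n + h i)‖ ≤ 1 := by
  rw [norm_mul]
  exact mul_le_one₀ (ha n) (norm_nonneg _) (norm_prod_le_one _ fun i _ => hb i _)

lemma norm_sum_mul_prod_le_norm_sum_shift_add (N : ℕ) (h : ι → ℕ) (s : ℕ) :
    ‖∑ n ∈ Icc 1 N, a n * ∏ i, b i (n + h i)‖ ≤
      ‖∑ n ∈ Icc 1 N, a (n + s) * ∏ i, b i (n + (h i + s))‖ + 2 * s := by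
  set f : ℕ → ℂ := fun m => a m * ∏ i, b i (m + h i)
  have hf : ∀ m, ‖f m‖ ≤ 1 := fun m => norm_mul_prod_le_one ha hb m h
  have hshift : ∀ n, a (n + s) * ∏ i, b i (n + (h i + s)) = f (n + s) := fun n => by
    simp only [f, add_comm (h _) s, add_assoc]
  simp only [hshift]
  linarith [norm_le_norm_add_norm_sub' (∑ n ∈ Icc 1 N, f n) (∑ n ∈ Icc 1 N, f (n + s)),
    norm_sub_rev (∑ n ∈ Icc 1 N, f n) (∑ n ∈ Icc 1 N, f (n + s)),
    norm_sum_Icc_add_sub_sum_Icc_le hf N s]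

lemma mul_sum_norm_sum_mul_prod_le [DecidableEq ι] (N H : ℕ) :
    H * ∑ h ∈ Fintype.piFinset (fun _ : ι => Icc 1 H),
        ‖∑ n ∈ Icc 1 N, a n * ∏ i, b i (n + h i)‖ ≤
      ∑ g ∈ Fintype.piFinset (fun _ : ι => Icc 1 (2 * H)), ∑ s ∈ Icc 1 H,
          ‖∑ n ∈ Icc 1 N, a (n + s) * ∏ i, b i (n + g i)‖ +
        2 * H ^ (Fintype.card ι + 2) := by
  set P := Fintype.piFinset (fun _ : ι => Icc 1 H)
  set P₂ := Fintype.piFinset (fun _ : ι => Icc 1 (2 * H))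
  have hcard : (#P : ℝ) = (H : ℝ) ^ Fintype.card ι := by simp [P]
  have hrow : ∀ s ∈ Icc 1 H, ∑ h ∈ P, ‖∑ n ∈ Icc 1 N, a n * ∏ i, b i (n + h i)‖ ≤
      ∑ g ∈ P₂, ‖∑ n ∈ Icc 1 N, a (n + s) * ∏ i, b i (n + g i)‖ +
        H ^ Fintype.card ι * (2 * H) := by
    intro s hs
    have hsH : (s : ℝ) ≤ H := by exact_mod_cast (mem_Icc.1 hs).2
    calc ∑ h ∈ P, ‖∑ n ∈ Icc 1 N, a n * ∏ i, b i (n + h i)‖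
        ≤ ∑ h ∈ P, (‖∑ n ∈ Icc 1 N, a (n + s) * ∏ i, b i (n + (h i + s))‖ + 2 * H) :=
          sum_le_sum fun h _ => by
            linarith [norm_sum_mul_prod_le_norm_sum_shift_add ha hb N h s]
      _ ≤ _ := by
          rw [sum_add_distrib, sum_const, nsmul_eq_mul, hcard]
          gcongr
          exact sum_piFinset_Icc_add_le
            (φ := fun g => ‖∑ n ∈ Icc 1 N, a (n + s) * ∏ i, b i (n + g i)‖)
            (fun _ => norm_nonneg _) (mem_Icc.1 hs).2
  calc (H : ℝ) * ∑ h ∈ P, ‖∑ n ∈ Icc 1 N, a n * ∏ i, b i (n + h i)‖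
      = ∑ s ∈ Icc 1 H, ∑ h ∈ P, ‖∑ n ∈ Icc 1 N, a n * ∏ i, b i (n + h i)‖ := by simp
    _ ≤ ∑ s ∈ Icc 1 H, (∑ g ∈ P₂, ‖∑ n ∈ Icc 1 N, a (n + s) * ∏ i, b i (n + g i)‖ +
          H ^ Fintype.card ι * (2 * H)) := sum_le_sum hrow
    _ = _ := by
        rw [sum_add_distrib, sum_comm]
        simp only [sum_const, Nat.card_Icc, add_tsub_cancel_right, nsmul_eq_mul]
        ring

end MultipleCorrelation

lemma sum_piFinset_sum_norm_sum_mul_prod_le_sqrt {ι : Type*} [Fintype ι] [DecidableEq ι]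
    (a : ℕ → ℂ) {b : ι → ℕ → ℂ} (hb : ∀ i n, ‖b i n‖ ≤ 1) (N H : ℕ) :
    ∑ g ∈ Fintype.piFinset (fun _ : ι => Icc 1 (2 * H)), ∑ s ∈ Icc 1 H,
        ‖∑ n ∈ Icc 1 N, a (n + s) * ∏ i, b i (n + g i)‖ ≤
      (2 * H) ^ Fintype.card ι *
        √(N * ∑ s ∈ Icc 1 H, ∑ t ∈ Icc 1 H, ‖∑ n ∈ Icc 1 N, a (n + s) * conj (a (n + t))‖) := by
  calc _ ≤ ∑ _g ∈ Fintype.piFinset (fun _ : ι => Icc 1 (2 * H)),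
          √(N * ∑ s ∈ Icc 1 H, ∑ t ∈ Icc 1 H, ‖∑ n ∈ Icc 1 N, a (n + s) * conj (a (n + t))‖) :=
        sum_le_sum fun g _ => by
          simpa using sum_norm_sum_mul_le_sqrt (Icc 1 H) (Icc 1 N) (fun s n => a (n + s))
            (u := fun n => ∏ i, b i (n + g i)) fun n _ => norm_prod_le_one _ fun i _ => hb i _
    _ = _ := by simp

noncomputable def avgAutocorr (a : ℕ → ℂ) (N H : ℕ) : ℝ :=
  (H : ℝ)⁻¹ * ∑ h ∈ Icc 1 H, (N : ℝ)⁻¹ * ‖∑ n ∈ Icc 1 N, a n * conj (a (n + h))‖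

noncomputable def avgMultCorr {k : ℕ} (a : ℕ → ℂ) (b : Fin k → ℕ → ℂ) (N H : ℕ) : ℝ :=
  ((H : ℝ) ^ k)⁻¹ * ∑ h ∈ Fintype.piFinset (fun _ : Fin k => Icc 1 H),
    (N : ℝ)⁻¹ * ‖∑ n ∈ Icc 1 N, a n * ∏ i, b i (n + h i)‖

section Averages

variable {k : ℕ} {a : ℕ → ℂ} {b : Fin k → ℕ → ℂ}

lemma avgMultCorr_le_sqrt_avgAutocorr (ha : ∀ n, ‖a n‖ ≤ 1) (hb : ∀ i n, ‖b i n‖ ≤ 1) {N H : ℕ}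
    (hN : 1 ≤ N) (hH : 1 ≤ H) :
    avgMultCorr a b N H ≤
      2 ^ k * √(2 / H + 2 * avgAutocorr a N H + 4 * ((H + 1) / N)) + 2 * ((H + 1) / N) := by
  have hHpos : (0 : ℝ) < H := by exact_mod_cast hH
  have hNpos : (0 : ℝ) < N := by exact_mod_cast hN
  set S := ∑ h ∈ Fintype.piFinset (fun _ : Fin k => Icc 1 H),
    ‖∑ n ∈ Icc 1 N, a n * ∏ i, b i (n + h i)‖
  set Q := ∑ s ∈ Icc 1 H, ∑ t ∈ Icc 1 H, ‖∑ n ∈ Icc 1 N, a (n + s) * conj (a (n + t))‖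
  set X := ∑ d ∈ Icc 1 H, ‖∑ n ∈ Icc 1 N, a n * conj (a (n + d))‖
  have hT : avgMultCorr a b N H = S / (H ^ k * N) := by
    simp only [avgMultCorr, S, ← mul_sum]
    field_simp
  have hD : avgAutocorr a N H = X / (H * N) := by
    simp only [avgAutocorr, X, ← mul_sum]
    field_simp
  rw [hD]
  set E := 2 / H + 2 * (X / (H * N)) + 4 * ((H + 1) / N)
  have hA : H * S ≤ (2 * H) ^ k * √(N * Q) + 2 * H ^ (k + 2) := by
    have hshift := mul_sum_norm_sum_mul_prod_le ha hb N H
    have hCS := sum_piFinset_sum_norm_sum_mul_prod_le_sqrt a hb N H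
    rw [Fintype.card_fin] at hshift hCS
    linarith
  have hsqrt : √(N * Q) ≤ H * N * √E := by
    have hQ : Q ≤ 2 * H * (N + X) + 4 * H ^ 2 * (H + 1) := sum_sum_norm_shift_mul_conj_le ha N H
    rw [← Real.sqrt_sq (by positivity : (0 : ℝ) ≤ H * N), ← Real.sqrt_mul (by positivity)]
    refine Real.sqrt_le_sqrt ?_
    -- `E` is chosen so that `(H N)² E = N (2 H (N + X) + 4 H² (H + 1))`.
    simp only [E]
    field_simp
    linarith
  have hS : S ≤ 2 ^ k * H ^ k * N * √E + 2 * H ^ (k + 1) := by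
    refine le_of_mul_le_mul_left ?_ hHpos
    calc H * S ≤ (2 * H) ^ k * (H * N * √E) + 2 * H ^ (k + 2) := hA.trans (by gcongr)
      _ = H * (2 ^ k * H ^ k * N * √E + 2 * H ^ (k + 1)) := by ring
  rw [hT, div_le_iff₀ (by positivity)]
  have : 2 * ((H + 1) / N) * (H ^ k * N) = 2 * (H + 1) * (H : ℝ) ^ k := by field_simp
  linarith [pow_succ (H : ℝ) k, pow_nonneg hHpos.le k]

lemma avgAutocorr_le_one (ha : ∀ n, ‖a n‖ ≤ 1) (N H : ℕ) : avgAutocorr a N H ≤ 1 := by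
  simpa [avgAutocorr] using inv_card_mul_sum_le_one (Icc 1 H) fun h _ =>
    inv_natCast_mul_norm_sum_Icc_le_one
      (fun n => by simpa using mul_le_one₀ (ha n) (norm_nonneg _) (ha (n + h))) N

lemma avgMultCorr_le_one (ha : ∀ n, ‖a n‖ ≤ 1) (hb : ∀ i n, ‖b i n‖ ≤ 1) (N H : ℕ) :
    avgMultCorr a b N H ≤ 1 := by
  simpa [avgMultCorr] using inv_card_mul_sum_le_one (Fintype.piFinset fun _ : Fin k => Icc 1 H)
    fun h _ => inv_natCast_mul_norm_sum_Icc_le_one (fun n => norm_mul_prod_le_one ha hb n h) N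

lemma avgMultCorr_nonneg (N H : ℕ) : 0 ≤ avgMultCorr a b N H := by
  unfold avgMultCorr
  positivity

end Averages

lemma limsup_le_of_eventually_le_of_tendsto_zero {α : Type*} {l : Filter α} [l.NeBot]
    {f g r : α → ℝ} {Φ : ℝ → ℝ → ℝ} (hΦc : Continuous (Function.uncurry Φ))
    (hΦm : Monotone (Function.uncurry Φ)) (hf : IsCoboundedUnder (· ≤ ·) l f)
    (hg : IsBoundedUnder (· ≤ ·) l g) (hr : Tendsto r l (𝓝 0))
    (hfg : ∀ᶠ x in l, f x ≤ Φ (g x) (r x)) :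
    limsup f l ≤ Φ (limsup g l) 0 := by
  set L := limsup g l
  have hlim : Tendsto (fun δ => Φ (L + δ) δ) (𝓝[>] 0) (𝓝 (Φ L 0)) := by
    refine Tendsto.mono_left ?_ nhdsWithin_le_nhds
    have hcont : Continuous fun δ => Φ (L + δ) δ :=
      hΦc.comp ((continuous_const.add continuous_id).prodMk continuous_id)
    simpa using hcont.tendsto 0
  refine ge_of_tendsto hlim (eventually_nhdsWithin_of_forall fun δ (hδ : 0 < δ) => ?_)
  refine limsup_le_of_le hf ?_
  filter_upwards [hfg, eventually_lt_of_limsup_lt (lt_add_of_pos_right L hδ) hg,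
    hr.eventually (gt_mem_nhds hδ)] with x hfx hgx hrx
  exact hfx.trans (hΦm (Prod.mk_le_mk.2 ⟨hgx.le, hrx.le⟩))

theorem averaged_double_to_multiple_correlations_general
    (N : ℕ → ℕ) (hN : StrictMono N)
    (k : ℕ)
    (a : ℕ → ℂ) (b : Fin k → ℕ → ℂ)
    (ha : ∀ n, ‖a n‖ ≤ 1) (hb : ∀ i n, ‖b i n‖ ≤ 1)
    (hcorr : Tendsto (fun H : ℕ =>
        Filter.limsup (fun ℓ => (H : ℝ)⁻¹ * ∑ h ∈ Finset.Icc 1 H,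
            (N ℓ : ℝ)⁻¹ * ‖∑ n ∈ Finset.Icc 1 (N ℓ), a n * (starRingEnd ℂ) (a (n + h))‖)
          atTop)
        atTop (nhds 0)) :
    Tendsto (fun H : ℕ =>
        Filter.limsup (fun ℓ => ((H : ℝ) ^ k)⁻¹ *
            ∑ h ∈ Fintype.piFinset (fun _ : Fin k => Finset.Icc 1 H),
              (N ℓ : ℝ)⁻¹ * ‖∑ n ∈ Finset.Icc 1 (N ℓ), a n * ∏ i, b i (n + h i)‖)
          atTop)
      atTop (nhds 0) := by
  change Tendsto (fun H : ℕ => limsup (fun ℓ => avgAutocorr a (N ℓ) H) atTop) atTop (𝓝 0)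
    at hcorr
  change Tendsto (fun H : ℕ => limsup (fun ℓ => avgMultCorr a b (N ℓ) H) atTop) atTop (𝓝 0)
  set L : ℕ → ℝ := fun H => limsup (fun ℓ => avgAutocorr a (N ℓ) H) atTop
  have hNtop : Tendsto (fun ℓ => (N ℓ : ℝ)) atTop atTop :=
    tendsto_natCast_atTop_atTop.comp hN.tendsto_atTop
  have hupper : ∀ H ≥ 1,
      limsup (fun ℓ => avgMultCorr a b (N ℓ) H) atTop ≤ 2 ^ k * √(2 / H + 2 * L H) :=
    fun H hH => by
      simpa using limsup_le_of_eventually_le_of_tendsto_zero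
        (Φ := fun x y => 2 ^ k * √(2 / H + 2 * x + 4 * y) + 2 * y) (by fun_prop)
        (fun p q hpq => by dsimp only [Function.uncurry]; gcongr; exacts [hpq.1, hpq.2, hpq.2])
        (isCoboundedUnder_le_of_le atTop fun ℓ => avgMultCorr_nonneg _ _)
        (isBoundedUnder_of ⟨1, fun ℓ => avgAutocorr_le_one ha _ _⟩)
        (tendsto_const_nhds.div_atTop hNtop)
        ((hN.tendsto_atTop.eventually_ge_atTop 1).mono fun ℓ hℓ =>
          avgMultCorr_le_sqrt_avgAutocorr ha hb hℓ hH)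
  have hbound : Tendsto (fun H : ℕ => 2 ^ k * √(2 / H + 2 * L H)) atTop (𝓝 0) := by
    simpa using ((tendsto_const_div_atTop_nhds_zero_nat 2).add (hcorr.const_mul 2)).sqrt.const_mul
      (2 ^ k)
  exact tendsto_of_tendsto_of_tendsto_of_le_of_le' tendsto_const_nhds hbound
    (Eventually.of_forall fun H => le_limsup_of_frequently_le
      (Frequently.of_forall fun ℓ => avgMultCorr_nonneg _ _)
      (isBoundedUnder_of ⟨1, fun ℓ => avgMultCorr_le_one ha hb _ _⟩))
    (eventually_atTop.2 ⟨1, hupper⟩)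

/-- From averaged double correlations to averaged multiple correlations.  Let
`(N_ℓ)` be an increasing sequence of positive integers, `k ≥ 1`, and let
`a, b₁, …, b_k : ℕ → ℂ` be bounded by `1`.  If
`lim_H limsup_ℓ (1/H) ∑_{h ≤ H} (1/N_ℓ) |∑_{n ≤ N_ℓ} a(n) conj(a(n+h))| = 0`,
then
`lim_H limsup_ℓ (1/Hᵏ) ∑_{h₁,…,h_k ≤ H} (1/N_ℓ) |∑_{n ≤ N_ℓ} a(n) ∏ᵢ bᵢ(n+hᵢ)| = 0`. -/
theorem averaged_double_to_multiple_correlations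
    (N : ℕ → ℕ) (hN : StrictMono N) (hNpos : ∀ ℓ, 0 < N ℓ)
    (k : ℕ) (hk : 1 ≤ k)
    (a : ℕ → ℂ) (b : Fin k → ℕ → ℂ)
    (ha : ∀ n, ‖a n‖ ≤ 1) (hb : ∀ i n, ‖b i n‖ ≤ 1)
    (hcorr : Tendsto (fun H : ℕ =>
        Filter.limsup (fun ℓ => (H : ℝ)⁻¹ * ∑ h ∈ Finset.Icc 1 H,
            (N ℓ : ℝ)⁻¹ * ‖∑ n ∈ Finset.Icc 1 (N ℓ), a n * (starRingEnd ℂ) (a (n + h))‖)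
          atTop)
        atTop (nhds 0)) :
    Tendsto (fun H : ℕ =>
        Filter.limsup (fun ℓ => ((H : ℝ) ^ k)⁻¹ *
            ∑ h ∈ Fintype.piFinset (fun _ : Fin k => Finset.Icc 1 H),
              (N ℓ : ℝ)⁻¹ * ‖∑ n ∈ Finset.Icc 1 (N ℓ), a n * ∏ i, b i (n + h i)‖)
          atTop)
      atTop (nhds 0) :=
  averaged_double_to_multiple_correlations_general N hN k a b ha hb hcorr
end
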